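/- arXiv:2110.08974 — 6 statements merged into one kernel-verified Lean document; each statement's English description precedes it below -/
import Mathlib

section
/- Let q be prime, let ψ₁, ψ₂ be primitive Dirichlet characters modulo q with ψ₁ ≠ ψ̄₂, let a, c be integers with gcd(a, q) = gcd(c, q) = 1, and let b, d be integers. Then ∑_{t mod q} ψ₁(at + b) ψ₂(ct + d) = ψ̄₁(c) ψ̄₂(a) ψ₁ψ₂(ad − bc) τ(ψ₁)τ(ψ̄₁ψ̄₂)/τ(ψ̄₂). -/
/-- e(x) = exp(2πix). -/
noncomputable def eC (x : ℂ) : ℂ := Complex.exp (2 * Real.pi * Complex.I * x)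

/-- The Gauss sum τ(χ) = ∑_{b mod q} χ(b) e(b/q). -/
noncomputable def gaussSum' {q : ℕ} [NeZero q] (χ : DirichletCharacter ℂ q) : ℂ :=
  ∑ b : ZMod q, χ b * eC ((b.val : ℂ) / (q : ℂ))

lemma gaussSum'_eq {q : ℕ} [NeZero q] (χ : DirichletCharacter ℂ q) :
    gaussSum' χ = gaussSum χ (ZMod.stdAddChar) := by
  unfold gaussSum' gaussSum
  refine Finset.sum_congr rfl fun b _ => ?_
  congr 1
  have h0 : ((b.val : ℤ) : ZMod q) = b := by push_cast; simp [ZMod.natCast_val, ZMod.cast_id]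
  have h1 : ZMod.stdAddChar b = Complex.exp (2 * Real.pi * Complex.I * ((b.val : ℤ) : ℂ) / q) :=
    by conv_lhs => rw [← h0, ZMod.stdAddChar_coe]
  rw [h1]
  unfold eC
  push_cast
  ring_nf

/-- Lemma 2.2, first part.  Since the characters take values in roots of unity, the
conjugate character `ψ̄` coincides with the inverse character `ψ⁻¹`. -/
theorem character_sum_eval (q : ℕ) (hq : q.Prime) [NeZero q]
    (ψ₁ ψ₂ : DirichletCharacter ℂ q) (hψ₁ : ψ₁.IsPrimitive) (hψ₂ : ψ₂.IsPrimitive)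
    (hne : ψ₁ ≠ ψ₂⁻¹) (a b c d : ZMod q) (ha : IsUnit a) (hc : IsUnit c) :
    ∑ t : ZMod q, ψ₁ (a * t + b) * ψ₂ (c * t + d) =
      ψ₁⁻¹ c * ψ₂⁻¹ a * (ψ₁ * ψ₂) (a * d - b * c) *
        gaussSum' ψ₁ * gaussSum' (ψ₁ * ψ₂)⁻¹ / gaussSum' ψ₂⁻¹ := by
  haveI : Fact q.Prime := ⟨hq⟩
  have ha0 : a ≠ 0 := ha.ne_zero
  have hc0 : c ≠ 0 := hc.ne_zero
  have hq1 : q ≠ 1 := hq.one_lt.ne'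
  -- nontriviality
  have hnt : ∀ χ : DirichletCharacter ℂ q, χ.IsPrimitive → χ ≠ 1 := by
    intro χ hχ h
    rw [h, DirichletCharacter.IsPrimitive, DirichletCharacter.conductor_one] at hχ
    exact hq1 hχ.symm
  have h1 : ψ₁ ≠ 1 := hnt ψ₁ hψ₁
  have h2 : ψ₂ ≠ 1 := hnt ψ₂ hψ₂
  have h12 : ψ₁ * ψ₂ ≠ 1 := fun h => hne (eq_inv_of_mul_eq_one_left h)
  -- set m
  set m : ZMod q := a * c⁻¹ * d - b with hm
  have hcm : c * m = a * d - b * c := by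
    field_simp [hm]
    rw [hm]
    linear_combination a * d * (mul_inv_cancel₀ hc0)
  -- Step 1 : change of variables
  have step1 : ∑ t : ZMod q, ψ₁ (a * t + b) * ψ₂ (c * t + d)
      = ψ₂ (c * a⁻¹) * ∑ u : ZMod q, ψ₁ u * ψ₂ (u + m) := by
    rw [Finset.mul_sum]
    have hbij : Function.Bijective (fun u : ZMod q => a⁻¹ * (u - b)) := by
      constructor
      · intro x y h
        simpa [mul_right_inj' (inv_ne_zero ha0), sub_left_inj] using h
      · intro y
        exact ⟨a * y + b, by field_simp; ring⟩
    rw [← Fintype.sum_bijective _ hbij _ _ ?_]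
    intro u
    have e1 : a * (a⁻¹ * (u - b)) + b = u := by field_simp; ring
    have e2 : c * (a⁻¹ * (u - b)) + d = (c * a⁻¹) * (u + m) := by
      field_simp [hm]
      linear_combination -hcm
    rw [e1, e2]
    simp only [map_mul]
    ring
  -- Gauss sum machinery
  have hprim : (ZMod.stdAddChar (N := q)).IsPrimitive := ZMod.isPrimitive_stdAddChar q
  have hcard : ((Fintype.card (ZMod q) : ℂ)) ≠ 0 := by
    rw [ZMod.card]
    exact_mod_cast (NeZero.ne q)
  have Tne : ∀ χ : DirichletCharacter ℂ q, χ ≠ 1 → gaussSum χ ZMod.stdAddChar ≠ 0 :=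
    fun χ hχ => gaussSum_ne_zero_of_nontrivial hcard hχ hprim
  have hneg : ((-1 : ZMod q))⁻¹ = -1 := by
    rw [inv_neg, inv_one]
  have Tmul : ∀ χ : DirichletCharacter ℂ q, χ ≠ 1 →
      gaussSum χ ZMod.stdAddChar * gaussSum χ⁻¹ ZMod.stdAddChar
        = χ (-1) * (Fintype.card (ZMod q) : ℂ) := by
    intro χ hχ
    have k1 := gaussSum_mul_gaussSum_eq_card hχ hprim
    have k2 := mul_gaussSum_inv_eq_gaussSum χ⁻¹ (ZMod.stdAddChar (N := q))
    have hinv : (χ⁻¹ : DirichletCharacter ℂ q) (-1) = χ (-1) := by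
      rw [MulChar.inv_apply', hneg]
    rw [hinv] at k2
    rw [← k2, ← k1]
    ring
  rw [step1, gaussSum'_eq, gaussSum'_eq, gaussSum'_eq]
  by_cases hm0 : m = 0
  · -- degenerate case: both sides vanish
    have hbc : a * d - b * c = 0 := by rw [← hcm, hm0, mul_zero]
    have hS : ∑ u : ZMod q, ψ₁ u * ψ₂ (u + m) = 0 := by
      have : ∀ u : ZMod q, ψ₁ u * ψ₂ (u + m) = (ψ₁ * ψ₂) u := by
        intro u
        rw [hm0, add_zero, MulChar.mul_apply]
      rw [Finset.sum_congr rfl fun u _ => this u]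
      exact MulChar.sum_eq_zero_of_ne_one h12
    have hz : (ψ₁ * ψ₂) (a * d - b * c) = 0 := by
      rw [hbc]
      exact MulChar.map_nonunit _ (by simp [hq.one_lt.ne'])
    rw [hS, hz]
    ring
  · -- main case
    have hS : ∑ u : ZMod q, ψ₁ u * ψ₂ (u + m)
        = (ψ₁ * ψ₂) m * (ψ₁ (-1) * jacobiSum ψ₁ ψ₂) := by
      have hbij : Function.Bijective (fun u : ZMod q => m * u) :=
        mulLeft_bijective₀ m hm0
      have r1 : ∑ u : ZMod q, ψ₁ u * ψ₂ (u + m)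
          = ∑ u : ZMod q, ψ₁ (m * u) * ψ₂ (m * u + m) :=
        (Fintype.sum_bijective _ hbij _ _ fun u => rfl).symm
      have r2 : ∀ u : ZMod q, ψ₁ (m * u) * ψ₂ (m * u + m)
          = (ψ₁ m * ψ₂ m) * (ψ₁ u * ψ₂ (u + 1)) := by
        intro u
        have : m * u + m = m * (u + 1) := by ring
        rw [this, map_mul, map_mul]
        ring
      have hbij2 : Function.Bijective (fun u : ZMod q => -u) := neg_involutive.bijective
      have r3 : ∑ u : ZMod q, ψ₁ u * ψ₂ (u + 1)
          = ψ₁ (-1) * jacobiSum ψ₁ ψ₂ := by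
        rw [jacobiSum, Finset.mul_sum]
        refine Fintype.sum_bijective _ hbij2 _ _ fun u => ?_
        have hsq : ψ₁ (-1) * ψ₁ (-1) = 1 := by
          rw [← map_mul]
          norm_num
        rw [show (1 : ZMod q) - -u = u + 1 by ring,
          show ψ₁ (-u) = ψ₁ (-1) * ψ₁ u by rw [← map_mul, neg_one_mul]]
        linear_combination (-(ψ₁ u * ψ₂ (u + 1))) * hsq
      rw [r1, Finset.sum_congr rfl fun u _ => r2 u, ← Finset.mul_sum, r3,
        MulChar.mul_apply]
    -- evaluate Jacobi sum and finish
    have hjac : jacobiSum ψ₁ ψ₂ = gaussSum ψ₁ ZMod.stdAddChar * gaussSum ψ₂ ZMod.stdAddChar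
        / gaussSum (ψ₁ * ψ₂) ZMod.stdAddChar :=
      jacobiSum_eq_gaussSum_mul_gaussSum_div_gaussSum hcard h12 hprim
    rw [hS, hjac]
    have h2i : (ψ₂⁻¹ : DirichletCharacter ℂ q) ≠ 1 := by rwa [Ne, inv_eq_one]
    have h12i : ((ψ₁ * ψ₂)⁻¹ : DirichletCharacter ℂ q) ≠ 1 := by rwa [Ne, inv_eq_one]
    have hz : gaussSum (ψ₁ * ψ₂) ZMod.stdAddChar ≠ 0 := Tne _ h12
    have hy : gaussSum (ψ₂⁻¹) ZMod.stdAddChar ≠ 0 := Tne _ h2i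
    have e2 := Tmul ψ₂ h2
    have e12 := Tmul (ψ₁ * ψ₂) h12
    have hec : ψ₁ c⁻¹ * ψ₁ c = 1 := by
      rw [← map_mul, inv_mul_cancel₀ hc0, map_one]
    rw [← hcm]
    have e12' : gaussSum (ψ₁ * ψ₂) ZMod.stdAddChar * gaussSum (ψ₁ * ψ₂)⁻¹ ZMod.stdAddChar
        = ψ₁ (-1) * ψ₂ (-1) * (Fintype.card (ZMod q) : ℂ) := by
      rw [e12, MulChar.mul_apply]
    have key : ψ₁ (-1) * (gaussSum ψ₁ ZMod.stdAddChar * gaussSum ψ₂ ZMod.stdAddChar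
          / gaussSum (ψ₁ * ψ₂) ZMod.stdAddChar)
        = gaussSum ψ₁ ZMod.stdAddChar * gaussSum (ψ₁ * ψ₂)⁻¹ ZMod.stdAddChar
          / gaussSum (ψ₂⁻¹) ZMod.stdAddChar := by
      rw [mul_div_assoc', div_eq_div_iff hz hy]
      linear_combination ψ₁ (-1) * gaussSum ψ₁ ZMod.stdAddChar * e2
        - gaussSum ψ₁ ZMod.stdAddChar * e12'
    rw [key]
    have hchar : ψ₂ (c * a⁻¹) * (ψ₁ * ψ₂) m = ψ₁⁻¹ c * ψ₂⁻¹ a * (ψ₁ * ψ₂) (c * m) := by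
      simp only [map_mul, MulChar.mul_apply, MulChar.inv_apply', hneg]
      linear_combination (-(ψ₂ a⁻¹ * ψ₂ c * ψ₁ m * ψ₂ m)) * hec
    calc ψ₂ (c * a⁻¹) * ((ψ₁ * ψ₂) m * (gaussSum ψ₁ ZMod.stdAddChar
          * gaussSum (ψ₁ * ψ₂)⁻¹ ZMod.stdAddChar / gaussSum (ψ₂⁻¹) ZMod.stdAddChar))
        = (ψ₂ (c * a⁻¹) * (ψ₁ * ψ₂) m) * gaussSum ψ₁ ZMod.stdAddChar
          * gaussSum (ψ₁ * ψ₂)⁻¹ ZMod.stdAddChar / gaussSum (ψ₂⁻¹) ZMod.stdAddChar := by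
          ring
      _ = _ := by rw [hchar]
end

section
/- Let q be prime, ψ a primitive Dirichlet character modulo q, and a, b, c, d integers with gcd(a,q) = gcd(c,q) = 1. Then ∑_{t mod q} ψ(at + b) ψ̄(ct + d) = ψ(a) ψ̄(c) r_q(ad − bc), where r_q is the Ramanujan sum modulo q. -/
/-- The Ramanujan sum modulo q, r_q(n) = ∑_{x mod q, gcd(x,q)=1} e(xn/q). -/
noncomputable def ramanujanSumZMod (q : ℕ) [NeZero q] (n : ZMod q) : ℂ :=
  ∑ x : (ZMod q)ˣ, eC ((((x : ZMod q) * n).val : ℂ) / (q : ℂ))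

open Finset

theorem Fintype.sum_units_add_apply_zero {G₀ M : Type*} [GroupWithZero G₀] [Fintype G₀]
    [DecidableEq G₀] [AddCommMonoid M] (f : G₀ → M) :
    ∑ u : G₀ˣ, f u + f 0 = ∑ x, f x := by
  calc ∑ u : G₀ˣ, f u + f 0 = ∑ x : {a : G₀ // a ≠ 0}, f x + f 0 := by
        congr 1; exact Fintype.sum_equiv unitsEquivNeZero _ _ fun _ => rfl
    _ = ∑ x ∈ univ.erase 0, f x + f 0 := by
        rw [sum_subtype (p := (· ≠ 0)) _ (fun _ => by simp) f]
    _ = ∑ x, f x := sum_erase_add _ _ (mem_univ 0)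

theorem DirichletCharacter.IsPrimitive.ne_one {R : Type*} [CommMonoidWithZero R] {n : ℕ}
    [NeZero n] {χ : DirichletCharacter R n} (hχ : χ.IsPrimitive) (hn : n ≠ 1) : χ ≠ 1 := by
  rw [Ne, eq_one_iff_conductor_eq_one, hχ]
  exact hn

namespace MulChar

variable {F R : Type*} [Field F] [Fintype F] [CommRing R] [IsDomain R] {χ : MulChar F R}

theorem sum_mul_inv_apply_add_one (hχ : χ ≠ 1) : ∑ t, χ t * χ⁻¹ (t + 1) = -1 := by
  have hsq : χ (-1) * χ (-1) = 1 := by rw [← map_mul, neg_one_mul, neg_neg, map_one]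
  have hJ : jacobiSum χ χ⁻¹ = χ (-1) * ∑ t, χ t * χ⁻¹ (t + 1) := by
    rw [jacobiSum, mul_sum, ← Equiv.sum_comp (Equiv.neg F)]
    refine sum_congr rfl fun t _ => ?_
    rw [Equiv.neg_apply, neg_eq_neg_one_mul, map_mul, mul_assoc, neg_one_mul, sub_neg_eq_add,
      add_comm 1]
  linear_combination -χ (-1) * hJ + χ (-1) * jacobiSum_nontrivial_inv hχ -
    (∑ t, χ t * χ⁻¹ (t + 1) + 1) * hsq

theorem sum_mul_inv_apply_add [DecidableEq F] (hχ : χ ≠ 1) (m : F) :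
    ∑ t, χ t * χ⁻¹ (t + m) = if m = 0 then (Fintype.card F : R) - 1 else -1 := by
  split_ifs with hm
  · calc ∑ t, χ t * χ⁻¹ (t + m) = ∑ t, (1 : MulChar F R) t := by
          simp only [hm, add_zero, ← mul_apply, mul_inv_cancel]
      _ = _ := by
          rw [sum_one_eq_card_units, Fintype.card_eq_card_units_add_one (α := F), Nat.cast_add,
            Nat.cast_one, add_sub_cancel_right]
  · have hscale (t : F) : χ (m * t) * χ⁻¹ (m * t + m) = χ t * χ⁻¹ (t + 1) := by
      rw [← mul_add_one, map_mul, map_mul, mul_mul_mul_comm, ← mul_apply, mul_inv_cancel,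
        one_apply (Ne.isUnit hm), one_mul]
    rw [← Equiv.sum_comp (Equiv.mulLeft₀ m hm), ← sum_mul_inv_apply_add_one hχ]
    exact sum_congr rfl fun t _ => hscale t

theorem sum_apply_mul_add_mul_inv_apply_mul_add [DecidableEq F] (hχ : χ ≠ 1) {a c : F}
    (ha : a ≠ 0) (hc : c ≠ 0) (b d : F) :
    ∑ t, χ (a * t + b) * χ⁻¹ (c * t + d) =
      χ a * χ⁻¹ c * if a * d - b * c = 0 then (Fintype.card F : R) - 1 else -1 := by
  set m := c⁻¹ * (a * d - b * c)
  have hline (t : F) : c * t + d = c * a⁻¹ * (a * t + b + m) := by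
    simp only [m]
    field_simp
    ring
  have hcoeff : χ⁻¹ (c * a⁻¹) = χ a * χ⁻¹ c := by
    rw [map_mul, inv_apply' χ a⁻¹, inv_inv, mul_comm]
  have hm : m = 0 ↔ a * d - b * c = 0 := by simp [m, hc]
  calc ∑ t, χ (a * t + b) * χ⁻¹ (c * t + d)
      = χ⁻¹ (c * a⁻¹) * ∑ t, χ (a * t + b) * χ⁻¹ (a * t + b + m) := by
        rw [mul_sum]
        refine sum_congr rfl fun t _ => ?_
        rw [hline, map_mul]
        ring
    _ = χ⁻¹ (c * a⁻¹) * ∑ u, χ u * χ⁻¹ (u + m) := by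
        congr 1
        exact Equiv.sum_comp ((Equiv.mulLeft₀ a ha).trans (Equiv.addRight b))
          fun u => χ u * χ⁻¹ (u + m)
    _ = _ := by rw [sum_mul_inv_apply_add hχ, hcoeff, if_congr hm rfl rfl]

end MulChar

theorem eC_val_div_eq_stdAddChar (N : ℕ) [NeZero N] (x : ZMod N) :
    eC ((x.val : ℂ) / N) = ZMod.stdAddChar x := by
  rw [ZMod.stdAddChar_apply, ZMod.toCircle_apply, eC, mul_div_assoc]

theorem ramanujanSumZMod_of_prime (q : ℕ) [Fact q.Prime] (n : ZMod q) :
    ramanujanSumZMod q n = if n = 0 then (q : ℂ) - 1 else -1 := by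
  have hsum := Fintype.sum_units_add_apply_zero fun x : ZMod q => ZMod.stdAddChar (x * n)
  rw [AddChar.sum_mulShift n (ZMod.isPrimitive_stdAddChar q), zero_mul,
    AddChar.map_zero_eq_one, ZMod.card] at hsum
  simp only [ramanujanSumZMod, eC_val_div_eq_stdAddChar]
  split_ifs at hsum ⊢ <;> linear_combination hsum

/-- Lemma 2.2, second part.  The conjugate character `ψ̄` is the inverse character `ψ⁻¹`. -/
theorem character_sum_eval_conj (q : ℕ) (hq : q.Prime) [NeZero q]
    (ψ : DirichletCharacter ℂ q) (hψ : ψ.IsPrimitive)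
    (a b c d : ZMod q) (ha : IsUnit a) (hc : IsUnit c) :
    ∑ t : ZMod q, ψ (a * t + b) * ψ⁻¹ (c * t + d) =
      ψ a * ψ⁻¹ c * ramanujanSumZMod q (a * d - b * c) := by
  have : Fact q.Prime := ⟨hq⟩
  rw [MulChar.sum_apply_mul_add_mul_inv_apply_mul_add (hψ.ne_one hq.ne_one) ha.ne_zero
    hc.ne_zero, ramanujanSumZMod_of_prime, ZMod.card]
end

section
/- Let χ, ψ be Dirichlet characters of the same modulus q such that χψ is primitive. Then the Jacobi sum satisfies J(χ, ψ) = τ(χ)τ(ψ)/τ(χψ), where J(χ, ψ) = ∑_{a mod q} χ(a) ψ(1 − a). -/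
/-- The Jacobi sum J(χ, ψ) = ∑_{a mod q} χ(a) ψ(1 − a). -/
noncomputable def jacobiSum' {q : ℕ} [NeZero q] (χ ψ : DirichletCharacter ℂ q) : ℂ :=
  ∑ a : ZMod q, χ a * ψ (1 - a)

open Finset ZMod

section FiniteRing

variable {R R' : Type*} [CommRing R] [Fintype R] [CommRing R']

lemma sum_eq_sum_units_of_map_nonunit [DecidableEq R] {M : Type*} [AddCommMonoid M] {f : R → M}
    (hf : ∀ a, ¬IsUnit a → f a = 0) : ∑ a, f a = ∑ u : Rˣ, f u :=
  (Fintype.sum_of_injective _ Units.val_injective _ _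
    (fun a ha ↦ hf a fun ⟨u, hu⟩ ↦ ha ⟨u, hu⟩) fun _ ↦ rfl).symm

lemma sum_mul_inv_one_add_eq_jacobiSum (χ ψ : MulChar R R') :
    ∑ d, ψ d * (χ * ψ)⁻¹ (1 + d) = jacobiSum χ ψ := by
  classical
  have hunit (u : Rˣ) : ψ (↑u⁻¹ - 1) * (χ * ψ)⁻¹ ↑u⁻¹ = χ u * ψ (1 - u) := by
    rw [MulChar.inv_apply, Ring.inverse_unit, inv_inv, MulChar.mul_apply, mul_left_comm,
      ← map_mul, sub_mul, Units.inv_mul, one_mul]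
  calc ∑ d, ψ d * (χ * ψ)⁻¹ (1 + d)
      = ∑ v, ψ (v - 1) * (χ * ψ)⁻¹ v := by
        simpa only [Equiv.coe_addLeft, add_sub_cancel_left] using
          Equiv.sum_comp (Equiv.addLeft (1 : R)) fun v ↦ ψ (v - 1) * (χ * ψ)⁻¹ v
    _ = ∑ u : Rˣ, ψ (u - 1) * (χ * ψ)⁻¹ u :=
        sum_eq_sum_units_of_map_nonunit fun v hv ↦ by rw [MulChar.map_nonunit _ hv, mul_zero]
    _ = ∑ u : Rˣ, ψ (↑u⁻¹ - 1) * (χ * ψ)⁻¹ ↑u⁻¹ :=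
        (Equiv.sum_comp (Equiv.inv Rˣ) fun u : Rˣ ↦ ψ (u - 1) * (χ * ψ)⁻¹ u).symm
    _ = ∑ u : Rˣ, χ u * ψ (1 - u) := Fintype.sum_congr _ _ hunit
    _ = jacobiSum χ ψ :=
        (sum_eq_sum_units_of_map_nonunit (f := fun a ↦ χ a * ψ (1 - a))
          fun a ha ↦ by rw [χ.map_nonunit ha, zero_mul]).symm

lemma gaussSum_mul_gaussSum_eq_sum_gaussSum_mulShift (χ ψ : MulChar R R') (e : AddChar R R') :
    gaussSum χ e * gaussSum ψ e = ∑ d, ψ d * gaussSum (χ * ψ) (e.mulShift (1 + d)) := by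
  have hrow (b : R) :
      ∑ c, χ b * e b * (ψ c * e c) = ∑ d, ψ d * ((χ * ψ) b * e ((1 + d) * b)) := by
    by_cases hb : IsUnit b
    · rw [← Equiv.sum_comp (Units.mulLeft hb.unit)]
      refine Fintype.sum_congr _ _ fun d ↦ ?_
      rw [Units.mulLeft_apply, hb.unit_spec, map_mul ψ, MulChar.mul_apply, add_mul, one_mul,
        mul_comm d, AddChar.map_add_eq_mul]
      ring
    · simp only [χ.map_nonunit hb, (χ * ψ).map_nonunit hb, zero_mul, mul_zero, sum_const_zero]
  calc gaussSum χ e * gaussSum ψ e = ∑ b, ∑ c, χ b * e b * (ψ c * e c) := sum_mul_sum ..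
    _ = ∑ b, ∑ d, ψ d * ((χ * ψ) b * e ((1 + d) * b)) := Fintype.sum_congr _ _ hrow
    _ = ∑ d, ∑ b, ψ d * ((χ * ψ) b * e ((1 + d) * b)) := sum_comm
    _ = ∑ d, ψ d * gaussSum (χ * ψ) (e.mulShift (1 + d)) := by
        simp only [gaussSum, mul_sum, AddChar.mulShift_apply]

end FiniteRing

lemma jacobiSum_mul_gaussSum_of_isPrimitive {N : ℕ} [NeZero N] {R : Type*} [CommRing R]
    [IsDomain R] {χ ψ : DirichletCharacter R N} (hχψ : (χ * ψ).IsPrimitive)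
    (e : AddChar (ZMod N) R) :
    gaussSum (χ * ψ) e * jacobiSum χ ψ = gaussSum χ e * gaussSum ψ e := by
  simp only [gaussSum_mul_gaussSum_eq_sum_gaussSum_mulShift,
    gaussSum_mulShift_of_isPrimitive e hχψ, ← sum_mul_inv_one_add_eq_jacobiSum χ ψ, mul_sum]
  exact Fintype.sum_congr _ _ fun d ↦ by ring

lemma gaussSum_stdAddChar_ne_zero_of_isPrimitive {N : ℕ} [NeZero N]
    {χ : DirichletCharacter ℂ N} (hχ : χ.IsPrimitive) : gaussSum χ stdAddChar ≠ 0 := by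
  intro hτ
  have hdft : 𝓕 (⇑χ) = 0 :=
    funext fun k ↦ by rw [hχ.fourierTransform_eq_inv_mul_gaussSum, hτ, mul_zero, Pi.zero_apply]
  simpa using congr_fun (dft.map_eq_zero_iff.mp hdft) 1

lemma gaussSum'_eq_gaussSum_stdAddChar {q : ℕ} [NeZero q] (χ : DirichletCharacter ℂ q) :
    gaussSum' χ = gaussSum χ stdAddChar :=
  Fintype.sum_congr _ _ fun b ↦ by rw [stdAddChar_apply, toCircle_apply, eC, mul_div_assoc]

/-- Relation (2.6) between Jacobi sums and Gauss sums. -/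
theorem jacobiSum_eq_gauss_div (q : ℕ) [NeZero q] (χ ψ : DirichletCharacter ℂ q)
    (hprim : (χ * ψ).IsPrimitive) :
    jacobiSum' χ ψ = gaussSum' χ * gaussSum' ψ / gaussSum' (χ * ψ) := by
  simp only [gaussSum'_eq_gaussSum_stdAddChar]
  rw [eq_div_iff (gaussSum_stdAddChar_ne_zero_of_isPrimitive hprim), mul_comm]
  exact jacobiSum_mul_gaussSum_of_isPrimitive hprim stdAddChar
end

section
/- For any complex numbers α, β and a complex s with sufficiently large real part, ∑_{m=1}^∞ σ_α(m) σ_β(m) m^{−s} = ζ(s) ζ(s − α) ζ(s − β) ζ(s − α − β) / ζ(2s − α − β) (Ramanujan's identity). -/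
/-!
Let `Q = squareIndicator.pmul (cpow ((α + β) / 2))`, so `Q (k²) = k ^ (α + β)` and `Q n = 0`
off the squares; its Dirichlet series is `ζ(2s - α - β)`. The identity then says that
`Q * σ_α σ_β = σ_α * (σ_α · n ^ β)` as Dirichlet convolutions, the right-hand side having
Dirichlet series `ζ(s) ζ(s - α) · ζ(s - β) ζ(s - α - β)`. All functions involved are
multiplicative, so it suffices to compare them at prime powers `p ^ e`: with `x = p ^ α` and
`y = p ^ β`, both sides `F` satisfy `F (e + 2) = σ_α(p ^ (e + 2)) σ_β(p ^ (e + 2)) + x y F e`.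

Absolute convergence of the series on the left follows by comparison with the real exponents
`Re α`, `Re β`: there all values are nonnegative, so
`σ_a σ_b ≤ Q * σ_a σ_b = σ_a * (σ_a · n ^ b)` termwise, and the last series converges.
-/

/-- The generalized divisor function with complex exponent (σ_w(0) = 0 by convention). -/
noncomputable def sigmaC (w : ℂ) (m : ℕ) : ℂ := ∑ d ∈ m.divisors, (d : ℂ) ^ w

open Finset ArithmeticFunction LSeries
open scoped LSeries.notation ArithmeticFunction.zeta ComplexOrder

section GeomSum

variable {R : Type*} [CommRing R]

def geomSum (x : R) (n : ℕ) : R := ∑ i ∈ range (n + 1), x ^ i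

lemma geomSum_zero (x : R) : geomSum x 0 = 1 := by simp [geomSum]

lemma geomSum_succ (x : R) (n : ℕ) : geomSum x (n + 1) = geomSum x n + x ^ (n + 1) :=
  sum_range_succ _ _

lemma geomSum_succ' (x : R) (n : ℕ) : geomSum x (n + 1) = 1 + x * geomSum x n := by
  simp only [geomSum, sum_range_succ' _ (n + 1), mul_sum, pow_succ']
  ring

lemma sum_antidiagonal_pow_snd (x : R) (n : ℕ) :
    ∑ ij ∈ antidiagonal n, x ^ ij.2 = geomSum x n := by
  rw [← Nat.sum_antidiagonal_swap, Nat.sum_antidiagonal_eq_sum_range_succ_mk]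
  rfl

lemma geomSum_mul_geomSum (x : R) (m n : ℕ) :
    geomSum x (m + 1) * geomSum x (n + 1) =
      geomSum x (m + n + 2) + x * (geomSum x m * geomSum x n) := by
  induction n with
  | zero => simp only [geomSum_succ, geomSum_zero]; ring
  | succ n ih =>
    rw [geomSum_succ x (n + 1), mul_add, ih, show m + (n + 1) + 2 = m + n + 2 + 1 by ring,
      geomSum_succ x (m + n + 2), geomSum_succ x m, geomSum_succ x n]
    ring

theorem Finset.Nat.sum_antidiagonal_add_two {M : Type*} [AddCommMonoid M] (f : ℕ × ℕ → M)
    (n : ℕ) :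
    ∑ ij ∈ antidiagonal (n + 2), f ij =
      f (0, n + 2) + f (n + 2, 0) + ∑ ij ∈ antidiagonal n, f (ij.1 + 1, ij.2 + 1) := by
  rw [Nat.sum_antidiagonal_succ, Nat.sum_antidiagonal_succ']
  exact (add_assoc _ _ _).symm

lemma sum_antidiagonal_geomSum_mul_pow_add_two (x y : R) (n : ℕ) :
    ∑ ij ∈ antidiagonal (n + 2), geomSum x ij.1 * (geomSum x ij.2 * y ^ ij.2) =
      geomSum x (n + 2) * geomSum y (n + 2) +
        x * y * ∑ ij ∈ antidiagonal n, geomSum x ij.1 * (geomSum x ij.2 * y ^ ij.2) := by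
  have inner : ∀ ij ∈ antidiagonal n,
      geomSum x (ij.1 + 1) * (geomSum x (ij.2 + 1) * y ^ (ij.2 + 1)) =
        geomSum x (n + 2) * (y * y ^ ij.2) +
          x * y * (geomSum x ij.1 * (geomSum x ij.2 * y ^ ij.2)) := by
    intro ij hij
    rw [← mul_assoc, geomSum_mul_geomSum, mem_antidiagonal.mp hij]
    ring
  rw [Nat.sum_antidiagonal_add_two, sum_congr rfl inner, sum_add_distrib, ← mul_sum, ← mul_sum,
    ← mul_sum, sum_antidiagonal_pow_snd, geomSum_succ y (n + 1), geomSum_succ' y n]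
  simp only [geomSum_zero]
  ring

lemma sum_antidiagonal_even_pow_mul_add_two {x y z : R} (hz : z * z = x * y) (n : ℕ) :
    ∑ ij ∈ antidiagonal (n + 2),
        (if Even ij.1 then z ^ ij.1 else 0) * (geomSum x ij.2 * geomSum y ij.2) =
      geomSum x (n + 2) * geomSum y (n + 2) + x * y * ∑ ij ∈ antidiagonal n,
        (if Even ij.1 then z ^ ij.1 else 0) * (geomSum x ij.2 * geomSum y ij.2) := by
  rw [Nat.sum_antidiagonal_succ, Nat.sum_antidiagonal_succ, mul_sum]
  simp only [Nat.even_add_one, not_not, Even.zero, not_true_eq_false, ↓reduceIte, pow_zero,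
    one_mul, zero_mul, zero_add]
  congr 1
  refine sum_congr rfl fun ij _ => ?_
  split_ifs
  · linear_combination z ^ ij.1 * (geomSum x ij.2 * geomSum y ij.2) * hz
  · simp

theorem sum_antidiagonal_even_pow_mul_eq {x y z : R} (hz : z * z = x * y) (n : ℕ) :
    ∑ ij ∈ antidiagonal n,
        (if Even ij.1 then z ^ ij.1 else 0) * (geomSum x ij.2 * geomSum y ij.2) =
      ∑ ij ∈ antidiagonal n, geomSum x ij.1 * (geomSum x ij.2 * y ^ ij.2) := by
  induction n using Nat.twoStepInduction with
  | zero => simp [geomSum_zero]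
  | one => simp [Nat.sum_antidiagonal_succ, geomSum_succ, geomSum_zero]; ring
  | more n ih _ =>
    rw [sum_antidiagonal_even_pow_mul_add_two hz, sum_antidiagonal_geomSum_mul_pow_add_two, ih]

end GeomSum

theorem Nat.Coprime.isSquare_mul_iff {m n : ℕ} (h : m.Coprime n) :
    IsSquare (m * n) ↔ IsSquare m ∧ IsSquare n := by
  refine ⟨fun ⟨c, hc⟩ => ?_, fun ⟨hm, hn⟩ => hm.mul hn⟩
  rw [← sq] at hc
  obtain ⟨a, rfl⟩ := exists_eq_pow_of_mul_eq_pow (Nat.isUnit_iff.mpr h) hc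
  obtain ⟨b, rfl⟩ :=
    exists_eq_pow_of_mul_eq_pow (Nat.isUnit_iff.mpr h.symm) ((mul_comm _ _).trans hc)
  exact ⟨⟨a, sq a⟩, ⟨b, sq b⟩⟩

theorem Nat.Prime.isSquare_pow_iff {p k : ℕ} (hp : p.Prime) : IsSquare (p ^ k) ↔ Even k := by
  refine ⟨fun ⟨c, hc⟩ => ?_, fun hk => hk.isSquare_pow p⟩
  obtain ⟨j, -, rfl⟩ := (Nat.dvd_prime_pow hp).mp (Dvd.intro _ hc.symm)
  rw [← pow_add] at hc
  exact ⟨j, Nat.pow_right_injective hp.two_le hc⟩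

lemma LSeriesSummable.of_norm_le {f g : ℕ → ℂ} {s : ℂ} (hg : LSeriesSummable g s)
    (h : ∀ n, ‖f n‖ ≤ ‖g n‖) : LSeriesSummable f s :=
  .of_norm <| hg.norm.of_nonneg_of_le (fun _ => norm_nonneg _) fun n => norm_term_le s (h n)

namespace ArithmeticFunction

lemma mul_apply_prime_pow {R : Type*} [Semiring R] (f g : ArithmeticFunction R) {p : ℕ}
    (hp : p.Prime) (k : ℕ) :
    (f * g) (p ^ k) = ∑ ij ∈ antidiagonal k, f (p ^ ij.1) * g (p ^ ij.2) := by
  rw [mul_apply, Nat.sum_divisorsAntidiagonal (fun a b => f a * g b),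
    Nat.sum_divisors_prime_pow hp, Nat.sum_antidiagonal_eq_sum_range_succ_mk]
  refine sum_congr rfl fun i hi => ?_
  rw [Nat.pow_div (Nat.lt_succ_iff.mp (mem_range.mp hi)) hp.pos]

lemma apply_le_mul_apply {R : Type*} [CommSemiring R] [PartialOrder R] [IsOrderedRing R]
    {f g : ArithmeticFunction R} (hf : ∀ n, 0 ≤ f n) (hg : ∀ n, 0 ≤ g n) (hf1 : f 1 = 1)
    (n : ℕ) : g n ≤ (f * g) n := by
  rcases eq_or_ne n 0 with rfl | hn
  · simp
  rw [mul_apply]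
  calc g n = f 1 * g n := by rw [hf1, one_mul]
    _ ≤ ∑ x ∈ n.divisorsAntidiagonal, f x.1 * g x.2 :=
      single_le_sum (f := fun x : ℕ × ℕ => f x.1 * g x.2) (a := (1, n))
        (fun x _ => mul_nonneg (hf _) (hg _)) (Nat.mem_divisorsAntidiagonal.mpr ⟨one_mul n, hn⟩)

section squareIndicator

variable {R : Type*} [MonoidWithZero R]

def squareIndicator : ArithmeticFunction R :=
  ⟨fun n => if n ≠ 0 ∧ IsSquare n then 1 else 0, by simp⟩

lemma squareIndicator_apply (n : ℕ) :
    (squareIndicator : ArithmeticFunction R) n = if n ≠ 0 ∧ IsSquare n then 1 else 0 := rfl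

lemma isMultiplicative_squareIndicator :
    (squareIndicator : ArithmeticFunction R).IsMultiplicative := by
  refine ⟨by simp [squareIndicator_apply], fun {m n} hmn => ?_⟩
  simp only [squareIndicator_apply, hmn.isSquare_mul_iff, mul_ne_zero_iff]
  split_ifs <;> simp_all

lemma squareIndicator_apply_prime_pow {p : ℕ} (hp : p.Prime) (k : ℕ) :
    (squareIndicator : ArithmeticFunction R) (p ^ k) = if Even k then 1 else 0 := by
  simp [squareIndicator_apply, hp.isSquare_pow_iff, hp.ne_zero]

end squareIndicator

lemma squareIndicator_nonneg (n : ℕ) : 0 ≤ (squareIndicator : ArithmeticFunction ℂ) n := by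
  rw [squareIndicator_apply]
  split_ifs <;> norm_num

lemma LSeriesHasSum_squareIndicator {s : ℂ} (h : 1 < (2 * s).re) :
    LSeriesHasSum ↗(squareIndicator : ArithmeticFunction ℂ) s (riemannZeta (2 * s)) := by
  have hsq : Function.Injective fun k : ℕ => k ^ 2 := Nat.pow_left_injective two_ne_zero
  have off : ∀ n ∉ Set.range fun k : ℕ => k ^ 2,
      term ↗(squareIndicator : ArithmeticFunction ℂ) s n = 0 := by
    intro n hn
    rcases eq_or_ne n 0 with rfl | h0
    · simp
    rw [term_of_ne_zero h0, squareIndicator_apply, if_neg fun h => hn ?_, zero_div]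
    obtain ⟨k, rfl⟩ := h.2.exists_sq
    exact ⟨k, rfl⟩
  have on : term ↗(squareIndicator : ArithmeticFunction ℂ) s ∘ (fun k : ℕ => k ^ 2) =
      term 1 (2 * s) := by
    ext k
    rcases eq_or_ne k 0 with rfl | hk
    · simp
    rw [Function.comp_apply, term_of_ne_zero (pow_ne_zero 2 hk), term_of_ne_zero hk,
      squareIndicator_apply, if_pos ⟨pow_ne_zero 2 hk, k, sq k⟩, Nat.cast_pow,
      ← Complex.natCast_cpow_natCast_mul]
    simp
  rw [LSeriesHasSum, ← hsq.hasSum_iff off, on]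
  exact LSeriesHasSum_one h

noncomputable def cpow (w : ℂ) : ArithmeticFunction ℂ :=
  ⟨fun n => if n = 0 then 0 else (n : ℂ) ^ w, rfl⟩

lemma cpow_apply {w : ℂ} {n : ℕ} (hn : n ≠ 0) : cpow w n = (n : ℂ) ^ w := if_neg hn

lemma cpow_apply_pow {w : ℂ} {n : ℕ} (hn : n ≠ 0) (k : ℕ) :
    cpow w (n ^ k) = ((n : ℂ) ^ w) ^ k := by
  rw [cpow_apply (pow_ne_zero k hn), Nat.cast_pow, ← Complex.natCast_cpow_natCast_mul,
    Complex.cpow_nat_mul]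

lemma isMultiplicative_cpow (w : ℂ) : (cpow w).IsMultiplicative := by
  refine ⟨by simp [cpow_apply], fun {m n} _ => ?_⟩
  rcases eq_or_ne m 0 with rfl | hm
  · simp [cpow]
  rcases eq_or_ne n 0 with rfl | hn
  · simp [cpow]
  rw [cpow_apply (mul_ne_zero hm hn), cpow_apply hm, cpow_apply hn, Nat.cast_mul,
    Complex.natCast_mul_natCast_cpow]

lemma cpow_ofReal_nonneg (r : ℝ) (n : ℕ) : 0 ≤ cpow (r : ℂ) n := by
  rcases eq_or_ne n 0 with rfl | hn
  · simp
  rw [cpow_apply hn, ← Complex.ofReal_natCast, ← Complex.ofReal_cpow n.cast_nonneg]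
  exact Complex.zero_le_real.mpr (Real.rpow_nonneg n.cast_nonneg r)

lemma term_pmul_cpow (f : ArithmeticFunction ℂ) (w s : ℂ) :
    term ↗(f.pmul (cpow w)) s = term ↗f (s - w) := by
  ext n
  rcases eq_or_ne n 0 with rfl | hn
  · simp
  rw [term_of_ne_zero hn, term_of_ne_zero hn, pmul_apply, cpow_apply hn,
    Complex.cpow_sub _ _ (Nat.cast_ne_zero.mpr hn), div_div_eq_mul_div]

lemma LSeriesHasSum_pmul_cpow_iff {f : ArithmeticFunction ℂ} {w s a : ℂ} :
    LSeriesHasSum ↗(f.pmul (cpow w)) s a ↔ LSeriesHasSum ↗f (s - w) a := by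
  rw [LSeriesHasSum, LSeriesHasSum, term_pmul_cpow]

lemma LSeriesHasSum_cpow {w s : ℂ} (h : 1 < (s - w).re) :
    LSeriesHasSum ↗(cpow w) s (riemannZeta (s - w)) := by
  rw [← zeta_pmul (cpow w), LSeriesHasSum_pmul_cpow_iff]
  exact LSeriesHasSum_zeta h

noncomputable def csigma (w : ℂ) : ArithmeticFunction ℂ := ζ * cpow w

lemma csigma_apply (w : ℂ) (n : ℕ) : csigma w n = sigmaC w n := by
  rw [csigma, coe_zeta_mul_apply, sigmaC]
  exact sum_congr rfl fun d hd => cpow_apply (Nat.pos_of_mem_divisors hd).ne'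

lemma csigma_apply_prime_pow (w : ℂ) {p : ℕ} (hp : p.Prime) (k : ℕ) :
    csigma w (p ^ k) = geomSum ((p : ℂ) ^ w) k := by
  rw [csigma, coe_zeta_mul_apply, Nat.sum_divisors_prime_pow hp, geomSum]
  exact sum_congr rfl fun i _ => cpow_apply_pow hp.ne_zero i

lemma isMultiplicative_csigma (w : ℂ) : (csigma w).IsMultiplicative :=
  isMultiplicative_zeta.natCast.mul (isMultiplicative_cpow w)

lemma csigma_ofReal_nonneg (r : ℝ) (n : ℕ) : 0 ≤ csigma (r : ℂ) n := by
  rw [csigma, coe_zeta_mul_apply]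
  exact sum_nonneg fun d _ => cpow_ofReal_nonneg r d

lemma norm_csigma_le (w : ℂ) (n : ℕ) : ‖csigma w n‖ ≤ ‖csigma (w.re : ℂ) n‖ := by
  have hterm : ∀ d ∈ n.divisors, ‖cpow w d‖ = (cpow (w.re : ℂ) d).re := by
    intro d hd
    have hd0 := Nat.pos_of_mem_divisors hd
    rw [Complex.re_eq_norm.mpr (cpow_ofReal_nonneg _ _), cpow_apply hd0.ne', cpow_apply hd0.ne',
      Complex.norm_natCast_cpow_of_pos hd0, Complex.norm_natCast_cpow_of_pos hd0,
      Complex.ofReal_re]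
  rw [← Complex.re_eq_norm.mpr (csigma_ofReal_nonneg _ _), csigma, csigma, coe_zeta_mul_apply,
    coe_zeta_mul_apply, Complex.re_sum, ← sum_congr rfl hterm]
  exact norm_sum_le _ _

lemma LSeriesHasSum_csigma {w s : ℂ} (h : 1 < s.re) (hw : 1 < (s - w).re) :
    LSeriesHasSum ↗(csigma w) s (riemannZeta s * riemannZeta (s - w)) :=
  LSeriesHasSum_mul (LSeriesHasSum_zeta h) (LSeriesHasSum_cpow hw)

theorem squareIndicator_pmul_cpow_mul_csigma_pmul_csigma (α β : ℂ) :
    squareIndicator.pmul (cpow ((α + β) / 2)) * (csigma α).pmul (csigma β) =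
      csigma α * (csigma α).pmul (cpow β) := by
  refine (IsMultiplicative.eq_iff_eq_on_prime_powers _
    ((isMultiplicative_squareIndicator.pmul (isMultiplicative_cpow _)).mul
      ((isMultiplicative_csigma α).pmul (isMultiplicative_csigma β))) _
    ((isMultiplicative_csigma α).mul
      ((isMultiplicative_csigma α).pmul (isMultiplicative_cpow β)))).mpr fun p k hp => ?_
  have hp0 : (p : ℂ) ≠ 0 := Nat.cast_ne_zero.mpr hp.ne_zero
  have hz :
      (p : ℂ) ^ ((α + β) / 2) * (p : ℂ) ^ ((α + β) / 2) = (p : ℂ) ^ α * (p : ℂ) ^ β := by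
    rw [← Complex.cpow_add _ _ hp0, ← Complex.cpow_add _ _ hp0, add_halves]
  simp only [mul_apply_prime_pow _ _ hp, pmul_apply, squareIndicator_apply_prime_pow hp,
    csigma_apply_prime_pow _ hp, cpow_apply_pow hp.ne_zero]
  rw [← sum_antidiagonal_even_pow_mul_eq hz]
  exact sum_congr rfl fun ij _ => by split_ifs <;> ring

variable {α β s : ℂ}

lemma LSeriesHasSum_csigma_mul_csigma_pmul_cpow (h : 1 < s.re) (hα : 1 < (s - α).re)
    (hβ : 1 < (s - β).re) (hαβ : 1 < (s - α - β).re) :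
    LSeriesHasSum ↗(csigma α * (csigma α).pmul (cpow β)) s
      (riemannZeta s * riemannZeta (s - α) * (riemannZeta (s - β) * riemannZeta (s - β - α))) :=
  LSeriesHasSum_mul (LSeriesHasSum_csigma h hα)
    (LSeriesHasSum_pmul_cpow_iff.mpr (LSeriesHasSum_csigma hβ (by rwa [sub_right_comm])))

lemma LSeriesSummable_csigma_pmul_csigma (h : 1 < s.re) (hα : 1 < (s - α).re)
    (hβ : 1 < (s - β).re) (hαβ : 1 < (s - α - β).re) :
    LSeriesSummable ↗((csigma α).pmul (csigma β)) s := by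
  have hG := (LSeriesHasSum_csigma_mul_csigma_pmul_cpow (α := α.re) (β := β.re) h
    (by simpa using hα) (by simpa using hβ) (by simpa using hαβ)).LSeriesSummable
  have hexp : ((α.re : ℂ) + β.re) / 2 = ((α.re + β.re) / 2 : ℝ) := by push_cast; ring
  refine hG.of_norm_le fun n => ?_
  calc ‖(csigma α).pmul (csigma β) n‖
        ≤ ‖(csigma (α.re : ℂ)).pmul (csigma (β.re : ℂ)) n‖ := by
        simp only [pmul_apply, norm_mul]
        exact mul_le_mul (norm_csigma_le α n) (norm_csigma_le β n) (norm_nonneg _) (norm_nonneg _)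
    _ ≤ ‖(csigma (α.re : ℂ) * (csigma (α.re : ℂ)).pmul (cpow (β.re : ℂ))) n‖ := by
        rw [← squareIndicator_pmul_cpow_mul_csigma_pmul_csigma, hexp]
        refine CStarAlgebra.norm_le_norm_of_nonneg_of_le ?_ (apply_le_mul_apply ?_ ?_ ?_ n)
        · exact mul_nonneg (csigma_ofReal_nonneg _ n) (csigma_ofReal_nonneg _ n)
        · exact fun m => mul_nonneg (squareIndicator_nonneg m) (cpow_ofReal_nonneg _ m)
        · exact fun m => mul_nonneg (csigma_ofReal_nonneg _ m) (csigma_ofReal_nonneg _ m)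
        · exact (isMultiplicative_squareIndicator.pmul (isMultiplicative_cpow _)).map_one

theorem LSeries_csigma_pmul_csigma_mul_riemannZeta (h : 1 < s.re) (hα : 1 < (s - α).re)
    (hβ : 1 < (s - β).re) (hαβ : 1 < (s - α - β).re) :
    LSeries ↗((csigma α).pmul (csigma β)) s * riemannZeta (2 * s - α - β) =
      riemannZeta s * riemannZeta (s - α) * riemannZeta (s - β) * riemannZeta (s - α - β) := by
  have hQ : LSeriesHasSum ↗(squareIndicator.pmul (cpow ((α + β) / 2))) s
      (riemannZeta (2 * s - α - β)) := by
    rw [LSeriesHasSum_pmul_cpow_iff, show 2 * s - α - β = 2 * (s - (α + β) / 2) by ring]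
    refine LSeriesHasSum_squareIndicator ?_
    rw [show 2 * (s - (α + β) / 2) = s - α - β + s by ring, Complex.add_re]
    linarith
  have hQF :=
    LSeriesHasSum_mul hQ (LSeriesSummable_csigma_pmul_csigma h hα hβ hαβ).LSeriesHasSum
  rw [squareIndicator_pmul_cpow_mul_csigma_pmul_csigma] at hQF
  rw [sub_right_comm s α β, mul_comm (LSeries _ _)]
  linear_combination hQF.unique (LSeriesHasSum_csigma_mul_csigma_pmul_cpow h hα hβ hαβ)

end ArithmeticFunction

/-- Ramanujan's identity for the Dirichlet series of σ_α(m)σ_β(m). -/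
theorem ramanujan_identity (α β s : ℂ)
    (hs : 1 + max α.re 0 + max β.re 0 < s.re) :
    ∑' m : ℕ, sigmaC α m * sigmaC β m / (m : ℂ) ^ s =
      riemannZeta s * riemannZeta (s - α) * riemannZeta (s - β) *
        riemannZeta (s - α - β) / riemannZeta (2 * s - α - β) := by
  have hα₀ := le_max_left α.re 0
  have hβ₀ := le_max_left β.re 0
  have h : 1 < s.re := by linarith [le_max_right α.re 0, le_max_right β.re 0]
  have hα : 1 < (s - α).re := by rw [Complex.sub_re]; linarith [le_max_right β.re 0]
  have hβ : 1 < (s - β).re := by rw [Complex.sub_re]; linarith [le_max_right α.re 0]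
  have hαβ : 1 < (s - α - β).re := by simp only [Complex.sub_re]; linarith
  have hζ : riemannZeta (2 * s - α - β) ≠ 0 := by
    refine riemannZeta_ne_zero_of_one_lt_re ?_
    rw [show 2 * s - α - β = s - α - β + s by ring, Complex.add_re]
    linarith
  have hL : LSeries ↗((csigma α).pmul (csigma β)) s =
      ∑' m : ℕ, sigmaC α m * sigmaC β m / (m : ℂ) ^ s := by
    refine tsum_congr fun m => ?_
    rcases eq_or_ne m 0 with rfl | hm
    · simp [sigmaC]
    rw [term_of_ne_zero hm, pmul_apply, csigma_apply, csigma_apply]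
  rw [eq_div_iff hζ, ← hL]
  exact LSeries_csigma_pmul_csigma_mul_riemannZeta h hα hβ hαβ
end

section
/- Let q ≥ 1 and ℓ a positive integer coprime to q, and n an integer with gcd(n, q) = 1. For Re(ξ) < 0 one has the Ramanujan expansion σ_ξ(n) = ζ^q(1 − ξ) ∑_{ℓ ≥ 1, gcd(ℓ,q)=1} ℓ^{ξ−1} r_ℓ(n), where ζ^q denotes the Riemann zeta function with Euler factors at primes dividing q removed. -/
/-- The Ramanujan sum r_c(n) = ∑_{x mod c, gcd(x,c)=1} e(xn/c). -/
noncomputable def ramanujanSum (c : ℕ) (n : ℕ) : ℂ :=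
  ∑ x ∈ (Finset.range c).filter (fun x => Nat.Coprime x c), eC ((x : ℂ) * (n : ℂ) / (c : ℂ))

/-- ζ^q(s): the Riemann zeta function with the Euler factors at primes dividing q removed. -/
noncomputable def zetaQ (q : ℕ) (s : ℂ) : ℂ :=
  riemannZeta s * ∏ p ∈ q.primeFactors, (1 - (p : ℂ) ^ (-s))

/-!
Kluyver's formula `r_ℓ(n) = ∑_{d ∣ (ℓ, n)} μ(ℓ/d) d` says that `ℓ ↦ r_ℓ(n)` is the Dirichlet
convolution of `μ` with `d ↦ d·[d ∣ n]`. Twisting by the principal character `χ₀` mod `q`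
(completely multiplicative) turns the series into the `L`-series at `s = 1 - ξ` of
`(χ₀ μ) ⋆ (χ₀ · d·[d ∣ n])`, i.e. `L(χ₀ μ, s) · σ_ξ(n)`, since every divisor of `n` is coprime
to `q`. For `Re s > 1` we have `L(χ₀, s) = ζ^q(s)` and `L(χ₀ μ, s) = 1 / L(χ₀, s)`.
-/

open ArithmeticFunction Finset LSeries
open scoped ArithmeticFunction.Moebius LSeries.notation

lemma eC_natCast_mul_div_eq_pow (c m x : ℕ) :
    eC (x * m / c) = Complex.exp (2 * Real.pi * Complex.I / c) ^ (m * x) := by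
  rw [eC, ← Complex.exp_nat_mul]
  congr 1
  push_cast
  ring

lemma sum_range_eC_mul_div {c : ℕ} (hc : c ≠ 0) (m : ℕ) :
    ∑ x ∈ range c, eC (x * m / c) = if c ∣ m then (c : ℂ) else 0 := by
  have hζ := Complex.isPrimitiveRoot_exp c hc
  simp_rw [eC_natCast_mul_div_eq_pow, pow_mul]
  split_ifs with hcm
  · simp [(hζ.pow_eq_one_iff_dvd m).2 hcm]
  · rw [geom_sum_eq ((hζ.pow_eq_one_iff_dvd m).not.2 hcm), pow_right_comm,
      hζ.pow_eq_one, one_pow, sub_self, zero_div]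

lemma ite_coprime_eq_sum_moebius {R : Type*} [Ring R] {c : ℕ} (hc : c ≠ 0) (x : ℕ) :
    (if x.Coprime c then (1 : R) else 0) = ∑ d ∈ c.divisors with d ∣ x, (μ d : R) := by
  have hdiv : {d ∈ c.divisors | d ∣ x} = (x.gcd c).divisors := by
    ext d
    simp only [mem_filter, Nat.mem_divisors, Nat.dvd_gcd_iff, ne_eq, Nat.gcd_eq_zero_iff, hc,
      and_false, not_false_eq_true]
    tauto
  have hsum := congrArg (· (x.gcd c)) (coe_moebius_mul_coe_zeta (R := R))
  simp only [coe_mul_zeta_apply, intCoe_apply, one_apply] at hsum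
  rw [hdiv, hsum]

lemma sum_range_filter_dvd {M : Type*} [AddCommMonoid M] {c d : ℕ} (hdc : d ∣ c) (f : ℕ → M) :
    ∑ x ∈ range c with d ∣ x, f x = ∑ y ∈ range (c / d), f (d * y) := by
  rcases Nat.eq_zero_or_pos d with rfl | hd
  · simp [Nat.eq_zero_of_zero_dvd hdc]
  have hmap : {x ∈ range c | d ∣ x} =
      (range (c / d)).map ⟨(d * ·), mul_right_injective₀ hd.ne'⟩ := by
    ext x
    simp only [mem_filter, mem_range, mem_map, Function.Embedding.coeFn_mk]
    constructor
    · rintro ⟨hx, y, rfl⟩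
      exact ⟨y, (Nat.lt_div_iff_mul_lt' hdc y).2 hx, rfl⟩
    · rintro ⟨y, hy, rfl⟩
      exact ⟨(Nat.lt_div_iff_mul_lt' hdc y).1 hy, dvd_mul_right d y⟩
  rw [hmap, sum_map]
  rfl

lemma ramanujanSum_eq_sum_divisors (n : ℕ) {c : ℕ} (hc : c ≠ 0) :
    ramanujanSum c n =
      ∑ d ∈ c.divisors, (μ d : ℂ) * if c / d ∣ n then ((c / d : ℕ) : ℂ) else 0 := by
  have hinner : ∀ d ∈ c.divisors,
      ∑ x ∈ range c with d ∣ x, eC (x * n / c) = if c / d ∣ n then ((c / d : ℕ) : ℂ) else 0 := by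
    intro d hd
    obtain ⟨hdc, -⟩ := Nat.mem_divisors.mp hd
    have hd0 : d ≠ 0 := (Nat.pos_of_mem_divisors hd).ne'
    rw [sum_range_filter_dvd hdc,
      ← sum_range_eC_mul_div ((Nat.div_ne_zero_iff_of_dvd hdc).2 ⟨hc, hd0⟩)]
    refine sum_congr rfl fun y _ => congrArg eC ?_
    rw [Nat.cast_div hdc (Nat.cast_ne_zero.2 hd0)]
    push_cast
    field_simp
  calc ramanujanSum c n
      = ∑ x ∈ range c, (if x.Coprime c then (1 : ℂ) else 0) * eC (x * n / c) := by
        rw [ramanujanSum, sum_filter]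
        simp_rw [ite_mul, one_mul, zero_mul]
    _ = ∑ x ∈ range c, ∑ d ∈ c.divisors with d ∣ x, (μ d : ℂ) * eC (x * n / c) := by
        simp_rw [ite_coprime_eq_sum_moebius hc, sum_mul]
    _ = ∑ d ∈ c.divisors, (μ d : ℂ) * ∑ x ∈ range c with d ∣ x, eC (x * n / c) := by
        simp_rw [mul_sum]
        exact sum_comm' fun x d => by simp only [mem_filter]; tauto
    _ = _ := sum_congr rfl fun d hd => by rw [hinner d hd]

def idOnDivisors (n : ℕ) : ℕ → ℂ := fun d => if d ∣ n then d else 0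

lemma ramanujanSum_eq_moebius_convolution (n : ℕ) {c : ℕ} (hc : c ≠ 0) :
    ramanujanSum c n = (↗μ ⍟ idOnDivisors n) c := by
  rw [ramanujanSum_eq_sum_divisors n hc, convolution_def]
  exact (Nat.sum_divisorsAntidiagonal fun a b => (μ a : ℂ) * if b ∣ n then (b : ℂ) else 0).symm

lemma trivChar_apply_natCast (q m : ℕ) :
    (1 : DirichletCharacter ℂ q) m = if m.Coprime q then 1 else 0 := by
  split_ifs with h
  · exact MulChar.one_apply ((ZMod.isUnit_iff_coprime m q).2 h)
  · exact MulChar.map_nonunit _ ((ZMod.isUnit_iff_coprime m q).not.2 h)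

lemma zetaQ_eq_LSeries_trivChar (q : ℕ) [NeZero q] {s : ℂ} (hs : 1 < s.re) :
    zetaQ q s = L ↗(1 : DirichletCharacter ℂ q) s := by
  have hs1 : s ≠ 1 := fun h => by simp [h] at hs
  rw [zetaQ, mul_comm, ← DirichletCharacter.LFunctionTrivChar_eq_mul_riemannZeta hs1,
    DirichletCharacter.LFunctionTrivChar, DirichletCharacter.LFunction_eq_LSeries _ hs]

lemma term_idOnDivisors {n : ℕ} (hn : n ≠ 0) (s : ℂ) (d : ℕ) :
    term (idOnDivisors n) s d = if d ∈ n.divisors then (d : ℂ) ^ (1 - s) else 0 := by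
  rcases eq_or_ne d 0 with rfl | hd
  · simp
  have hd0 : (d : ℂ) ≠ 0 := Nat.cast_ne_zero.2 hd
  rw [term_of_ne_zero hd, idOnDivisors, Complex.cpow_sub _ _ hd0, Complex.cpow_one]
  simp only [Nat.mem_divisors, hn, ne_eq, not_false_eq_true, and_true]
  split_ifs <;> simp

lemma LSeriesSummable_idOnDivisors {n : ℕ} (hn : n ≠ 0) (s : ℂ) :
    LSeriesSummable (idOnDivisors n) s :=
  summable_of_ne_finset_zero (s := n.divisors) fun d hd => by
    rw [term_idOnDivisors hn, if_neg hd]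

lemma LSeries_idOnDivisors {n : ℕ} (hn : n ≠ 0) (s : ℂ) :
    L (idOnDivisors n) s = sigmaC (1 - s) n := by
  rw [LSeries, tsum_congr (term_idOnDivisors hn s),
    tsum_eq_sum (s := n.divisors) fun d hd => if_neg hd, sigmaC]
  exact sum_congr rfl fun d hd => if_pos hd

lemma ite_coprime_cpow_mul_eq_term (q : ℕ) (f : ℕ → ℂ) (ξ : ℂ) (ℓ : ℕ) :
    (if 1 ≤ ℓ ∧ ℓ.Coprime q then (ℓ : ℂ) ^ (ξ - 1) * f ℓ else 0) =
      term (↗(1 : DirichletCharacter ℂ q) * f) (1 - ξ) ℓ := by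
  rcases eq_or_ne ℓ 0 with rfl | hℓ
  · simp
  have hinv : (ℓ : ℂ) ^ (ξ - 1) = ((ℓ : ℂ) ^ (1 - ξ))⁻¹ := by rw [← Complex.cpow_neg, neg_sub]
  rw [term_of_ne_zero hℓ, Pi.mul_apply, trivChar_apply_natCast, hinv]
  simp only [Nat.one_le_iff_ne_zero.2 hℓ, true_and]
  split_ifs <;> ring

lemma trivChar_mul_idOnDivisors {q n : ℕ} (hn : n.Coprime q) :
    ↗(1 : DirichletCharacter ℂ q) * idOnDivisors n = idOnDivisors n := by
  funext d
  rw [Pi.mul_apply, idOnDivisors, trivChar_apply_natCast]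
  by_cases hd : d ∣ n
  · simp [hd, Nat.Coprime.coprime_dvd_left hd hn]
  · simp [hd]

/-- The Ramanujan expansion (3.7) of the divisor function. -/
theorem ramanujan_expansion (q n : ℕ) (hq : 0 < q) (hn : 0 < n)
    (hcop : Nat.Coprime n q) (ξ : ℂ) (hξ : ξ.re < 0) :
    sigmaC ξ n =
      zetaQ q (1 - ξ) *
        ∑' ℓ : ℕ, if 1 ≤ ℓ ∧ Nat.Coprime ℓ q then (ℓ : ℂ) ^ (ξ - 1) * ramanujanSum ℓ n
          else 0 := by
  have : NeZero q := ⟨hq.ne'⟩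
  set χ : DirichletCharacter ℂ q := 1
  have hs : 1 < (1 - ξ).re := by simp; linarith
  have hseries : (∑' ℓ : ℕ, if 1 ≤ ℓ ∧ Nat.Coprime ℓ q then (ℓ : ℂ) ^ (ξ - 1) * ramanujanSum ℓ n
      else 0) = L (↗χ * ↗μ) (1 - ξ) * sigmaC ξ n :=
    calc _ = L (↗χ * fun ℓ => ramanujanSum ℓ n) (1 - ξ) :=
          tsum_congr (ite_coprime_cpow_mul_eq_term q _ ξ)
      _ = L (↗χ * (↗μ ⍟ idOnDivisors n)) (1 - ξ) := LSeries_congr (fun hℓ => by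
          rw [Pi.mul_apply, Pi.mul_apply, ramanujanSum_eq_moebius_convolution n hℓ]) _
      _ = L ((↗χ * ↗μ) ⍟ idOnDivisors n) (1 - ξ) := by
          rw [← DirichletCharacter.mul_convolution_distrib, trivChar_mul_idOnDivisors hcop]
      _ = L (↗χ * ↗μ) (1 - ξ) * sigmaC ξ n := by
          rw [LSeries_convolution' (DirichletCharacter.LSeriesSummable_mul χ
              (LSeriesSummable_moebius_iff.2 hs)) (LSeriesSummable_idOnDivisors hn.ne' _),
            LSeries_idOnDivisors hn.ne', sub_sub_cancel]
  rw [hseries, zetaQ_eq_LSeries_trivChar q hs, ← mul_assoc,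
    DirichletCharacter.LSeries.mul_mu_eq_one χ hs, one_mul]
end

section
/- Let q be a positive integer, w, s complex numbers with Re(s) large enough for absolute convergence. Then ∑_{n=1}^∞ (σ_w(n)/n^s) ∑_{d | gcd(n,q)} μ(q/d) d = ζ(s) ζ(s − w) ∑_{c | q} μ(c) c^{1+w−2s} ∑_{d | q/c} μ(q/(cd)) d^{1−s} σ_w(d). -/
/-!
Writing the Ramanujan sum as `r_q(n) = ∑_{d ∣ q, d ∣ n} μ(q/d) d` reduces the series to the
Dirichlet series of `m ↦ σ_w(d m)` for the divisors `d` of `q`. Each divisor of `d m` is uniquely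
`a b` with `a ∣ d`, `b ∣ m` and `(d/a, b) = 1`; detecting the coprimality with `μ` gives
`σ_w(d m) = ∑_{e ∣ (d, m)} μ(e) e^w σ_w(d/e) σ_w(m/e)`. Since `∑ σ_w(n) n^{-s} = ζ(s) ζ(s - w)`,
the series of `m ↦ σ_w(d m)` is `ζ(s) ζ(s - w) ∑_{e ∣ d} μ(e) e^w σ_w(d/e) (d e)^{-s}`, and
substituting `d = e f` regroups the double sum over `d ∣ q`, `e ∣ d` into the stated one.
-/

open ArithmeticFunction

open Finset Complex
open scoped ArithmeticFunction.Moebius LSeries.notation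

namespace Nat

lemma gcd_mul_eq_of_coprime_div {a b m : ℕ} (ha : a ∣ m) (hab : (m / a).Coprime b) :
    (a * b).gcd m = a := by
  conv_lhs => rw [← Nat.mul_div_cancel' ha, Nat.gcd_mul_left, hab.symm.gcd_eq_one, mul_one]

lemma sum_divisors_mul_eq_sum_coprime {M : Type*} [AddCommMonoid M] {m n : ℕ} (hm : m ≠ 0)
    (hn : n ≠ 0) (f : ℕ → M) :
    ∑ k ∈ (m * n).divisors, f k =
      ∑ a ∈ m.divisors, ∑ b ∈ n.divisors, if (m / a).Coprime b then f (a * b) else 0 := by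
  rw [← sum_product' (f := fun a b ↦ if (m / a).Coprime b then f (a * b) else 0), ← sum_filter]
  refine sum_nbij' (fun k ↦ (k.gcd m, k / k.gcd m)) (fun p ↦ p.1 * p.2) (fun k hk ↦ ?_)
    (fun p hp ↦ ?_) (fun k _ ↦ Nat.mul_div_cancel' (gcd_dvd_left k m)) (fun p hp ↦ ?_)
    (fun k _ ↦ by rw [Nat.mul_div_cancel' (gcd_dvd_left k m)])
  · have hg : 0 < k.gcd m := gcd_pos_of_pos_left m (pos_of_mem_divisors hk)
    simp only [mem_filter, mem_product, mem_divisors] at hk ⊢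
    exact ⟨⟨⟨gcd_dvd_right k m, hm⟩, (div_dvd_iff_dvd_mul (gcd_dvd_left k m) hg).mpr
      (dvd_gcd_mul_iff_dvd_mul.mpr hk.1), hn⟩, (coprime_div_gcd_div_gcd hg).symm⟩
  · simp only [mem_filter, mem_product, mem_divisors] at hp ⊢
    exact ⟨mul_dvd_mul hp.1.1.1 hp.1.2.1, mul_ne_zero hm hn⟩
  · simp only [mem_filter, mem_product, mem_divisors] at hp
    have ha₀ : 0 < p.1 := pos_of_dvd_of_pos hp.1.1.1 (pos_of_ne_zero hm)
    simp only [gcd_mul_eq_of_coprime_div hp.1.1.1 hp.2, Nat.mul_div_cancel_left _ ha₀]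

lemma sum_moebius_divisors (n : ℕ) : ∑ d ∈ n.divisors, μ d = if n = 1 then 1 else 0 := by
  rw [← coe_mul_zeta_apply, moebius_mul_coe_zeta, one_apply]

lemma ite_coprime_eq_sum_moebius {M : Type*} [AddCommGroup M] (x y : ℕ) (c : M) :
    (if x.Coprime y then c else 0) = ∑ e ∈ (x.gcd y).divisors, μ e • c := by
  rw [← sum_smul, sum_moebius_divisors]
  by_cases h : x.Coprime y <;> simp [h]

lemma divisors_gcd_eq_filter {m : ℕ} (hm : m ≠ 0) (n : ℕ) :
    (m.gcd n).divisors = {d ∈ m.divisors | d ∣ n} := by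
  ext d
  simp only [mem_divisors, mem_filter, dvd_gcd_iff, ne_eq, gcd_eq_zero_iff, hm, false_and,
    not_false_eq_true, and_true]

lemma divisors_gcd_div_eq_filter {a b m n : ℕ} (hm : m ≠ 0) (ha : a ∣ m) (hb : b ∣ n) :
    ((m / a).gcd b).divisors = {e ∈ (m.gcd n).divisors | e ∣ m / a ∧ e ∣ b} := by
  have hma : m / a ≠ 0 := (div_ne_zero_iff_of_dvd ha).mpr ⟨hm, ne_zero_of_dvd_ne_zero hm ha⟩
  ext e
  simp only [mem_divisors, mem_filter, dvd_gcd_iff, ne_eq, gcd_eq_zero_iff, hm, hma, false_and,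
    not_false_eq_true, and_true]
  exact ⟨fun h ↦ ⟨⟨h.1.trans (div_dvd_of_dvd ha), h.2.trans hb⟩, h⟩, And.right⟩

lemma filter_dvd_div_divisors {e m : ℕ} (he : e ∣ m) :
    {a ∈ m.divisors | e ∣ m / a} = (m / e).divisors := by
  rcases eq_or_ne m 0 with rfl | hm
  · simp
  have hme : m / e ≠ 0 := (div_ne_zero_iff_of_dvd he).mpr ⟨hm, ne_zero_of_dvd_ne_zero hm he⟩
  ext a
  simp only [mem_filter, mem_divisors, hm, hme, ne_eq, not_false_eq_true, and_true,
    dvd_div_iff_mul_dvd he]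
  constructor
  · rintro ⟨ham, hema⟩
    rwa [mul_comm, ← dvd_div_iff_mul_dvd ham]
  · intro hea
    have ham : a ∣ m := (dvd_mul_left a e).trans hea
    exact ⟨ham, by rwa [dvd_div_iff_mul_dvd ham, mul_comm]⟩

lemma sum_divisors_filter_dvd {M : Type*} [AddCommMonoid M] {e n : ℕ} (he : e ∣ n)
    (g : ℕ → M) : ∑ d ∈ n.divisors with e ∣ d, g d = ∑ d ∈ (n / e).divisors, g (e * d) := by
  rcases eq_or_ne n 0 with rfl | hn
  · simp
  have he₀ : 0 < e := pos_of_dvd_of_pos he (pos_of_ne_zero hn)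
  have hne : n / e ≠ 0 := (div_ne_zero_iff_of_dvd he).mpr ⟨hn, he₀.ne'⟩
  refine sum_nbij' (· / e) (e * ·) (fun d hd ↦ ?_) (fun f hf ↦ ?_) (fun d hd ↦ ?_)
    (fun f _ ↦ Nat.mul_div_cancel_left f he₀) (fun d hd ↦ ?_)
  · simp only [mem_filter, mem_divisors] at hd ⊢
    exact ⟨Nat.div_dvd_div hd.2 hd.1.1, hne⟩
  · simp only [mem_filter, mem_divisors] at hf ⊢
    exact ⟨⟨(dvd_div_iff_mul_dvd he).mp hf.1, hn⟩, dvd_mul_right e f⟩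
  · exact Nat.mul_div_cancel' (mem_filter.mp hd).2
  · rw [Nat.mul_div_cancel' (mem_filter.mp hd).2]

theorem sum_divisors_mul_eq_sum_moebius {M : Type*} [AddCommGroup M] (m n : ℕ) (f : ℕ → M) :
    ∑ k ∈ (m * n).divisors, f k = ∑ e ∈ (m.gcd n).divisors,
      μ e • ∑ a ∈ (m / e).divisors, ∑ b ∈ (n / e).divisors, f (a * e * b) := by
  rcases eq_or_ne m 0 with rfl | hm
  · simp
  rcases eq_or_ne n 0 with rfl | hn
  · simp
  calc ∑ k ∈ (m * n).divisors, f k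
      = ∑ a ∈ m.divisors, ∑ b ∈ n.divisors, ∑ e ∈ (m.gcd n).divisors,
          if e ∣ m / a then if e ∣ b then μ e • f (a * b) else 0 else 0 := by
        rw [sum_divisors_mul_eq_sum_coprime hm hn]
        refine sum_congr rfl fun a ha ↦ sum_congr rfl fun b hb ↦ ?_
        rw [ite_coprime_eq_sum_moebius, divisors_gcd_div_eq_filter hm (dvd_of_mem_divisors ha)
          (dvd_of_mem_divisors hb), sum_filter]
        simp only [ite_and]
    _ = ∑ e ∈ (m.gcd n).divisors,
          μ e • ∑ a ∈ m.divisors with e ∣ m / a, ∑ b ∈ n.divisors with e ∣ b, f (a * b) := by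
        rw [sum_congr rfl fun a _ ↦ sum_comm, sum_comm]
        simp only [sum_filter, smul_sum, smul_ite, smul_zero, sum_ite_irrel, sum_const_zero]
    _ = _ := by
        refine sum_congr rfl fun e he ↦ ?_
        have he' := dvd_gcd_iff.mp (dvd_of_mem_divisors he)
        simp only [filter_dvd_div_divisors he'.1, sum_divisors_filter_dvd he'.2, mul_assoc]

lemma sum_divisors_sum_divisors {M : Type*} [AddCommMonoid M] (n : ℕ) (F : ℕ → ℕ → M) :
    ∑ d ∈ n.divisors, ∑ e ∈ d.divisors, F d e =
      ∑ e ∈ n.divisors, ∑ f ∈ (n / e).divisors, F (e * f) e := by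
  rw [sum_comm' (t' := n.divisors) (s' := fun e ↦ {d ∈ n.divisors | e ∣ d})]
  · exact sum_congr rfl fun e he ↦ sum_divisors_filter_dvd (dvd_of_mem_divisors he) _
  · intro d e
    simp only [mem_divisors, mem_filter]
    exact ⟨fun ⟨hd, he, _⟩ ↦ ⟨⟨hd, he⟩, he.trans hd.1, hd.2⟩,
      fun ⟨⟨hd, he⟩, _⟩ ↦ ⟨hd, he, ne_zero_of_dvd_ne_zero hd.2 hd.1⟩⟩

end Nat

@[simp]
lemma sigmaC_zero (w : ℂ) : sigmaC w 0 = 0 := by simp [sigmaC]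

lemma sigmaC_mul (w : ℂ) (m n : ℕ) :
    sigmaC w (m * n) = ∑ e ∈ (m.gcd n).divisors,
      μ e * (e : ℂ) ^ w * sigmaC w (m / e) * sigmaC w (n / e) := by
  rw [sigmaC, Nat.sum_divisors_mul_eq_sum_moebius]
  refine sum_congr rfl fun e _ ↦ ?_
  rw [zsmul_eq_mul, mul_assoc, sigmaC, sigmaC, sum_mul_sum]
  simp only [mul_sum]
  refine sum_congr rfl fun a _ ↦ sum_congr rfl fun b _ ↦ ?_
  rw [Nat.cast_mul, natCast_mul_natCast_cpow, Nat.cast_mul, natCast_mul_natCast_cpow]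
  ring

lemma sigmaC_eq_convolution (w : ℂ) : sigmaC w = 1 ⍟ fun n : ℕ ↦ (n : ℂ) ^ w := by
  ext n
  simp only [LSeries.convolution_def, Pi.one_apply, one_mul, sigmaC]
  rw [← Nat.map_div_left_divisors, sum_map]
  rfl

lemma LSeries.term_eq_div {f : ℕ → ℂ} (hf : f 0 = 0) (s : ℂ) (n : ℕ) :
    LSeries.term f s n = f n / (n : ℂ) ^ s := by
  rcases eq_or_ne n 0 with rfl | hn
  · simp [hf]
  · exact LSeries.term_of_ne_zero hn f s

lemma LSeriesHasSum_natCast_cpow {w s : ℂ} (h : 1 < (s - w).re) :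
    LSeriesHasSum (fun n : ℕ ↦ (n : ℂ) ^ w) s (riemannZeta (s - w)) := by
  have hterm : LSeries.term (fun n : ℕ ↦ (n : ℂ) ^ w) s = LSeries.term 1 (s - w) := by
    ext n
    rcases eq_or_ne n 0 with rfl | hn
    · simp
    · rw [LSeries.term_of_ne_zero hn, LSeries.term_of_ne_zero hn, Pi.one_apply,
        cpow_sub _ _ (Nat.cast_ne_zero.mpr hn), one_div_div]
  rw [LSeriesHasSum, hterm]
  exact LSeriesHasSum_one h

lemma LSeriesHasSum_sigmaC {w s : ℂ} (hs : 1 < s.re) (hsw : 1 < (s - w).re) :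
    LSeriesHasSum (sigmaC w) s (riemannZeta s * riemannZeta (s - w)) := by
  rw [sigmaC_eq_convolution]
  exact (LSeriesHasSum_one hs).convolution (LSeriesHasSum_natCast_cpow hsw)

lemma hasSum_ite_dvd_iff {α : Type*} [AddCommMonoid α] [TopologicalSpace α] {f : ℕ → α} {a : α}
    {d : ℕ} (hd : d ≠ 0) :
    HasSum (fun n ↦ if d ∣ n then f n else 0) a ↔ HasSum (fun m ↦ f (d * m)) a := by
  rw [← (mul_right_injective₀ hd).hasSum_iff]
  · simp [Function.comp_def]
  · rintro n hn
    rw [if_neg]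
    rintro ⟨m, rfl⟩
    exact hn ⟨m, rfl⟩

lemma term_sigmaC_mul (w s : ℂ) (d m : ℕ) :
    LSeries.term (sigmaC w) s (d * m) = ∑ e ∈ d.divisors, μ e * (e : ℂ) ^ w * sigmaC w (d / e) *
      ((d * e : ℕ) : ℂ) ^ (-s) * if e ∣ m then LSeries.term (sigmaC w) s (m / e) else 0 := by
  rcases eq_or_ne d 0 with rfl | hd
  · simp
  rcases eq_or_ne m 0 with rfl | hm
  · simp
  rw [LSeries.term_def₀ (sigmaC_zero w), sigmaC_mul, Nat.divisors_gcd_eq_filter hd,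
    sum_filter, sum_mul]
  refine sum_congr rfl fun e he ↦ ?_
  split_ifs with hem
  · obtain ⟨k, rfl⟩ := hem
    rw [Nat.mul_div_cancel_left _ (Nat.pos_of_mem_divisors he), LSeries.term_def₀ (sigmaC_zero w),
      ← mul_assoc d e k, Nat.cast_mul, natCast_mul_natCast_cpow]
    ring
  · simp

lemma hasSum_term_sigmaC_mul {w s Z : ℂ} (hZ : LSeriesHasSum (sigmaC w) s Z) (d : ℕ) :
    HasSum (fun m ↦ LSeries.term (sigmaC w) s (d * m))
      ((∑ e ∈ d.divisors, μ e * (e : ℂ) ^ w * sigmaC w (d / e) * ((d * e : ℕ) : ℂ) ^ (-s)) *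
        Z) := by
  simp only [term_sigmaC_mul, sum_mul]
  refine hasSum_sum fun e he ↦ HasSum.mul_left _ ?_
  rw [hasSum_ite_dvd_iff (Nat.pos_of_mem_divisors he).ne']
  simp only [Nat.mul_div_cancel_left _ (Nat.pos_of_mem_divisors he)]
  exact hZ

lemma hasSum_term_sigmaC_mul_ramanujanSum {w s Z : ℂ} (hZ : LSeriesHasSum (sigmaC w) s Z)
    (q : ℕ) :
    HasSum (fun n ↦ LSeries.term (sigmaC w) s n * ∑ d ∈ (n.gcd q).divisors, (μ (q / d) : ℂ) * d)
      ((∑ d ∈ q.divisors, μ (q / d) * (d : ℂ) *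
        ∑ e ∈ d.divisors, μ e * (e : ℂ) ^ w * sigmaC w (d / e) * ((d * e : ℕ) : ℂ) ^ (-s)) *
          Z) := by
  rcases eq_or_ne q 0 with rfl | hq
  · simp
  have hsplit (n : ℕ) :
      LSeries.term (sigmaC w) s n * ∑ d ∈ (n.gcd q).divisors, (μ (q / d) : ℂ) * d =
        ∑ d ∈ q.divisors, μ (q / d) * (d : ℂ) *
          if d ∣ n then LSeries.term (sigmaC w) s n else 0 := by
    rw [Nat.gcd_comm, Nat.divisors_gcd_eq_filter hq, sum_filter, mul_sum]
    refine sum_congr rfl fun d _ ↦ ?_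
    split_ifs <;> ring
  simp only [hsplit, sum_mul]
  refine hasSum_sum fun d hd ↦ ?_
  rw [mul_assoc]
  exact ((hasSum_ite_dvd_iff (Nat.pos_of_mem_divisors hd).ne').mpr
    (hasSum_term_sigmaC_mul hZ d)).mul_left _

lemma sum_divisors_moebius_mul_sum_sigmaC (w s : ℂ) (q : ℕ) :
    ∑ d ∈ q.divisors, μ (q / d) * (d : ℂ) *
        ∑ e ∈ d.divisors, μ e * (e : ℂ) ^ w * sigmaC w (d / e) * ((d * e : ℕ) : ℂ) ^ (-s) =
      ∑ c ∈ q.divisors, μ c * (c : ℂ) ^ (1 + w - 2 * s) *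
        ∑ d ∈ (q / c).divisors, μ (q / (c * d)) * (d : ℂ) ^ (1 - s) * sigmaC w d := by
  simp only [mul_sum]
  rw [Nat.sum_divisors_sum_divisors]
  refine sum_congr rfl fun c hc ↦ sum_congr rfl fun f hf ↦ ?_
  have hc₀ := Nat.pos_of_mem_divisors hc
  have hc : (c : ℂ) ≠ 0 := by exact_mod_cast hc₀.ne'
  have hf : (f : ℂ) ≠ 0 := by exact_mod_cast (Nat.pos_of_mem_divisors hf).ne'
  rw [Nat.mul_div_cancel_left _ hc₀, show 1 + w - 2 * s = 1 + w + -s + -s by ring,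
    show 1 - s = 1 + -s by ring, cpow_add _ _ hc, cpow_add _ _ hc, cpow_add _ _ hc,
    cpow_add _ _ hf, cpow_one, cpow_one, Nat.cast_mul (c * f) c, natCast_mul_natCast_cpow,
    Nat.cast_mul c f, natCast_mul_natCast_cpow]
  ring

theorem dirichlet_series_sigma_ramanujan_general (q : ℕ) (w s : ℂ)
    (hs : 1 + max w.re 0 < s.re) :
    ∑' n : ℕ, (sigmaC w n / (n : ℂ) ^ s) *
        (∑ d ∈ (Nat.gcd n q).divisors, (moebius (q / d) : ℂ) * (d : ℂ)) =
      riemannZeta s * riemannZeta (s - w) *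
        ∑ c ∈ q.divisors, (moebius c : ℂ) * (c : ℂ) ^ (1 + w - 2 * s) *
          ∑ d ∈ (q / c).divisors, (moebius (q / (c * d)) : ℂ) * (d : ℂ) ^ (1 - s) *
            sigmaC w d := by
  have hs₁ : 1 < s.re := by linarith [le_max_right w.re 0]
  have hsw : 1 < (s - w).re := by rw [sub_re]; linarith [le_max_left w.re 0]
  simp_rw [← LSeries.term_eq_div (sigmaC_zero w)]
  rw [(hasSum_term_sigmaC_mul_ramanujanSum (LSeriesHasSum_sigmaC hs₁ hsw) q).tsum_eq,
    sum_divisors_moebius_mul_sum_sigmaC, mul_comm]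

/-- Dirichlet series evaluation of σ_w(n) r_q(n), where
r_q(n) = ∑_{d | gcd(n,q)} μ(q/d) d is the Ramanujan sum. -/
theorem dirichlet_series_sigma_ramanujan (q : ℕ) (hq : 0 < q) (w s : ℂ)
    (hs : 1 + max w.re 0 < s.re) :
    ∑' n : ℕ, (sigmaC w n / (n : ℂ) ^ s) *
        (∑ d ∈ (Nat.gcd n q).divisors, (moebius (q / d) : ℂ) * (d : ℂ)) =
      riemannZeta s * riemannZeta (s - w) *
        ∑ c ∈ q.divisors, (moebius c : ℂ) * (c : ℂ) ^ (1 + w - 2 * s) *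
          ∑ d ∈ (q / c).divisors, (moebius (q / (c * d)) : ℂ) * (d : ℂ) ^ (1 - s) *
            sigmaC w d :=
  dirichlet_series_sigma_ramanujan_general q w s hs
end
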